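/- There exist a constant C > 0 and an integer K such that for every integer k ≥ K with k+1 prime, ĝ(k+1)/ĝ(k) ≥ C · log k. -/

import Mathlib

open Finset Filter Real Asymptotics

/-- `digit i p k` is the `i`-th digit of `k` in base `p`, i.e. `⌊k / p^i⌋ mod p`. -/
def digit (i p k : ℕ) : ℕ := (k / p ^ i) % p

/-- `Mk k = ∏_{p ≤ k, p prime} p^(⌊log_p k⌋ + 1)`. -/
def Mk (k : ℕ) : ℕ :=
  ∏ p ∈ (Finset.range (k + 1)).filter Nat.Prime, p ^ (Nat.log p k + 1)

/-- `Rk k = ∏_{p ≤ k, p prime} ∏_{i=0}^{⌊log_p k⌋} (p − a_{i,p}(k))`. -/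
def Rk (k : ℕ) : ℕ :=
  ∏ p ∈ (Finset.range (k + 1)).filter Nat.Prime,
    ∏ i ∈ Finset.range (Nat.log p k + 1), (p - digit i p k)

/-- The heuristic estimate `ĝ(k) = M_k / R_k` for the Erdős–Selfridge function. -/
def ghat (k : ℕ) : ℚ := (Mk k : ℚ) / (Rk k : ℚ)

/-! Write `ĝ(k) = ∏_{p ≤ k} ∏_i p / (p - a_{i,p}(k))`. If `k + 1` is prime, no prime `p ≤ k`
divides `k + 1`, so passing from `k` to `k + 1` raises the last base-`p` digit `a` by one without
a carry; this multiplies the `p`-part by `(p - a) / (p - a - 1) ≥ p / (p - 1)`, while the new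
prime `k + 1` contributes a factor `≥ 1`. Hence `ĝ(k + 1) / ĝ(k) ≥ ∏_{p ≤ k} (1 - 1/p)⁻¹`, and
expanding this Euler product over the `(k + 1)`-smooth numbers bounds it below by
`∑_{n ≤ k} 1/n ≥ log (k + 1)`. So `C = 1` works. -/

noncomputable def ghatLocal (p k : ℕ) : ℝ :=
  ∏ i ∈ range (Nat.log p k + 1), (p : ℝ) / (p - digit i p k)

lemma digit_lt {p : ℕ} (hp : 0 < p) (i k : ℕ) : digit i p k < p :=
  Nat.mod_lt _ hp

lemma one_le_ghatLocal {p : ℕ} (hp : 0 < p) (k : ℕ) : 1 ≤ ghatLocal p k := by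
  refine one_le_prod fun i _ => ?_
  have hd : (digit i p k : ℝ) < p := by exact_mod_cast digit_lt hp i k
  exact (one_le_div (by linarith)).2 (by linarith [(digit i p k).cast_nonneg (α := ℝ)])

lemma ghatLocal_pos {p N : ℕ} (hp : p ∈ N.primesBelow) (k : ℕ) : 0 < ghatLocal p k :=
  zero_lt_one.trans_le (one_le_ghatLocal (Nat.prime_of_mem_primesBelow hp).pos k)

lemma ghat_eq_prod_ghatLocal (k : ℕ) :
    (ghat k : ℝ) = ∏ p ∈ Nat.primesBelow (k + 1), ghatLocal p k := by
  rw [ghat, Mk, Rk, Rat.cast_div, Rat.cast_natCast, Rat.cast_natCast, Nat.cast_prod, Nat.cast_prod,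
    ← prod_div_distrib]
  refine prod_congr rfl fun p hp => ?_
  have hp0 := (Nat.prime_of_mem_primesBelow hp).pos
  rw [ghatLocal, prod_div_distrib, prod_const, card_range, Nat.cast_prod, Nat.cast_pow]
  congr 1
  exact prod_congr rfl fun i _ => Nat.cast_sub (digit_lt hp0 i k).le

namespace Nat

lemma add_one_mod_of_not_dvd {b k : ℕ} (hb : 1 < b) (h : ¬ b ∣ k + 1) :
    (k + 1) % b = k % b + 1 := by
  have hlt : k % b + 1 < b := by
    refine lt_of_le_of_ne (Nat.mod_lt k (by omega)) fun heq => h ?_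
    rw [Nat.dvd_iff_mod_eq_zero, Nat.add_mod, Nat.mod_eq_of_lt hb, heq, Nat.mod_self]
  rw [Nat.add_mod_of_add_mod_lt (by rwa [Nat.mod_eq_of_lt hb]), Nat.mod_eq_of_lt hb]

lemma log_add_one_of_not_dvd {b k : ℕ} (hb : 1 < b) (h : ¬ b ∣ k + 1) :
    Nat.log b (k + 1) = Nat.log b k := by
  rcases eq_or_ne k 0 with rfl | hk
  · simp
  refine ((log_eq_log_succ_iff hb hk).2 fun hpow => h ?_).symm
  rw [← hpow]
  refine dvd_pow_self b fun hlog => ?_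
  rw [hlog, pow_zero] at hpow
  omega

end Nat

lemma digit_zero_add_one_of_not_dvd {p k : ℕ} (hp : 1 < p) (h : ¬ p ∣ k + 1) :
    digit 0 p (k + 1) = digit 0 p k + 1 := by
  simp only [digit, pow_zero, Nat.div_one, Nat.add_one_mod_of_not_dvd hp h]

lemma digit_succ_add_one_of_not_dvd {p k : ℕ} (h : ¬ p ∣ k + 1) (i : ℕ) :
    digit (i + 1) p (k + 1) = digit (i + 1) p k := by
  have hpow : ¬ p ^ (i + 1) ∣ k + 1 := fun hdvd => h ((dvd_pow_self p i.succ_ne_zero).trans hdvd)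
  rw [digit, digit, Nat.succ_div_of_not_dvd hpow]

lemma inv_one_sub_inv_mul_div_le {p a : ℝ} (ha : 0 ≤ a) (hap : a + 1 < p) :
    (1 - p⁻¹)⁻¹ * (p / (p - a)) ≤ p / (p - (a + 1)) := by
  have hp : 0 < p := by linarith
  have hinv : (1 - p⁻¹)⁻¹ = p / (p - 1) := by field_simp
  rw [hinv, div_mul_div_comm, div_le_div_iff₀ (by nlinarith) (by linarith)]
  nlinarith

lemma inv_one_sub_inv_mul_ghatLocal_le {p k : ℕ} (hp : 1 < p) (h : ¬ p ∣ k + 1) :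
    (1 - (p : ℝ)⁻¹)⁻¹ * ghatLocal p k ≤ ghatLocal p (k + 1) := by
  have hd : digit 0 p k + 1 < p := by
    rw [← digit_zero_add_one_of_not_dvd hp h]
    exact digit_lt (by omega) 0 (k + 1)
  rw [ghatLocal, ghatLocal, Nat.log_add_one_of_not_dvd hp h, prod_range_succ', prod_range_succ',
    digit_zero_add_one_of_not_dvd hp h, ← mul_assoc, mul_comm _ (∏ i ∈ _, _), mul_assoc]
  simp only [digit_succ_add_one_of_not_dvd h]
  refine mul_le_mul_of_nonneg_left ?_ ?_
  · push_cast
    exact inv_one_sub_inv_mul_div_le (Nat.cast_nonneg _) (by exact_mod_cast hd)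
  · refine prod_nonneg fun i _ => div_nonneg (Nat.cast_nonneg _) (sub_nonneg.2 ?_)
    exact_mod_cast (digit_lt (by omega) _ k).le

lemma sum_inv_le_prod_primesBelow {N : ℕ} {s : Finset ℕ} (hs : ↑s ⊆ N.smoothNumbers) :
    ∑ m ∈ s, (m : ℝ)⁻¹ ≤ ∏ p ∈ N.primesBelow, (1 - (p : ℝ)⁻¹)⁻¹ := by
  let f : ℕ →* ℝ := invMonoidHom.comp (Nat.castRingHom ℝ : ℕ →* ℝ)
  have hf : ∀ {p : ℕ}, p.Prime → ‖f p‖ < 1 := fun {p} hp => by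
    simpa [f, abs_inv] using inv_lt_one_of_one_lt₀ (by exact_mod_cast hp.one_lt : (1 : ℝ) < p)
  have hsum := hasSum_subtype_iff_indicator.1
    (EulerProduct.summable_and_hasSum_smoothNumbers_prod_primesBelow_geometric hf N).2
  calc ∑ m ∈ s, (m : ℝ)⁻¹ = ∑ m ∈ s, (N.smoothNumbers).indicator f m :=
        sum_congr rfl fun m hm => by simp [Set.indicator_of_mem (hs hm), f]
    _ ≤ _ := sum_le_hasSum s (fun m _ => Set.indicator_nonneg (fun m _ => by simp [f]) m) hsum

lemma log_add_one_le_prod_primesBelow (k : ℕ) :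
    Real.log (k + 1) ≤ ∏ p ∈ Nat.primesBelow (k + 1), (1 - (p : ℝ)⁻¹)⁻¹ := by
  have hsmooth : ↑(Icc 1 k) ⊆ (k + 1).smoothNumbers := fun m hm => by
    obtain ⟨h1, hk⟩ := mem_Icc.1 hm
    exact Nat.mem_smoothNumbers_of_lt h1 (Nat.lt_add_one_of_le hk)
  calc Real.log (k + 1) ≤ harmonic k := by exact_mod_cast log_add_one_le_harmonic k
    _ = ∑ m ∈ Icc 1 k, (m : ℝ)⁻¹ := by simp [harmonic_eq_sum_Icc]
    _ ≤ _ := sum_inv_le_prod_primesBelow hsmooth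

lemma prod_inv_one_sub_inv_mul_ghat_le {k : ℕ} (hk : (k + 1).Prime) :
    (∏ p ∈ Nat.primesBelow (k + 1), (1 - (p : ℝ)⁻¹)⁻¹) * ghat k ≤ ghat (k + 1) := by
  have hnotdvd : ∀ p ∈ Nat.primesBelow (k + 1), ¬ p ∣ k + 1 := fun p hp hdvd =>
    (Nat.lt_of_mem_primesBelow hp).ne <|
      (Nat.prime_dvd_prime_iff_eq (Nat.prime_of_mem_primesBelow hp) hk).1 hdvd
  rw [ghat_eq_prod_ghatLocal, ghat_eq_prod_ghatLocal, Nat.primesBelow_succ (k + 1), if_pos hk,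
    prod_insert (Nat.notMem_primesBelow _), ← prod_mul_distrib]
  calc ∏ p ∈ Nat.primesBelow (k + 1), (1 - (p : ℝ)⁻¹)⁻¹ * ghatLocal p k
      ≤ ∏ p ∈ Nat.primesBelow (k + 1), ghatLocal p (k + 1) := by
        refine prod_le_prod (fun p hp => ?_) fun p hp =>
          inv_one_sub_inv_mul_ghatLocal_le (Nat.prime_of_mem_primesBelow hp).one_lt (hnotdvd p hp)
        have hp1 : (1 : ℝ) ≤ p := by exact_mod_cast (Nat.prime_of_mem_primesBelow hp).one_le
        exact mul_nonneg (inv_nonneg.2 (sub_nonneg.2 (inv_le_one_of_one_le₀ hp1)))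
          (ghatLocal_pos hp k).le
    _ ≤ ghatLocal (k + 1) (k + 1) * ∏ p ∈ Nat.primesBelow (k + 1), ghatLocal p (k + 1) :=
        le_mul_of_one_le_left (prod_nonneg fun p hp => (ghatLocal_pos hp _).le)
          (one_le_ghatLocal k.succ_pos _)

/-- There exist `C > 0` and `K` such that for every `k ≥ K` with `k+1` prime,
`ĝ(k+1)/ĝ(k) ≥ C · log k`. -/
theorem ghat_ratio_lower_bound :
    ∃ C : ℝ, 0 < C ∧ ∃ K : ℕ, ∀ k : ℕ, K ≤ k → Nat.Prime (k + 1) →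
      C * Real.log k ≤ (ghat (k + 1) : ℝ) / (ghat k : ℝ) := by
  refine ⟨1, one_pos, 1, fun k hk hprime => ?_⟩
  have hghat : 0 < (ghat k : ℝ) := by
    rw [ghat_eq_prod_ghatLocal]
    exact prod_pos fun p hp => ghatLocal_pos hp k
  rw [one_mul, le_div_iff₀ hghat]
  have hk0 : (0 : ℝ) < k := by exact_mod_cast hk
  calc Real.log k * ghat k ≤ Real.log (k + 1) * ghat k := by
        gcongr
        linarith
    _ ≤ (∏ p ∈ Nat.primesBelow (k + 1), (1 - (p : ℝ)⁻¹)⁻¹) * ghat k := by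
        gcongr
        exact log_add_one_le_prod_primesBelow k
    _ ≤ ghat (k + 1) := prod_inv_one_sub_inv_mul_ghat_le hprime
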